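/- For every affine root a ∈ R, the Demazure–Lusztig element Ť(a) satisfies the quadratic relation (Ť(a) − τ_a)(Ť(a) + τ_a^{−1}) = 0 in 𝒜 # W; in particular (Ť_j − τ_j)(Ť_j + τ_j^{−1}) = 0 for j = 0,…,n. -/

import Mathlib

open scoped BigOperators
open RealInnerProductSpace

noncomputable section

/-- The alternating word `x y x y ⋯` with `m` factors. -/
def braidWord {M : Type} [Monoid M] (x y : M) (m : ℕ) : M :=
  ((List.range m).map (fun i => if i % 2 = 0 then x else y)).prod

/-- The data of:  an irreducible reduced crystallographic root system `R₀` of full rank,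
realized inside its weight lattice `P` which is embedded in a Euclidean space `V`;
the ring `𝕃` of coefficients together with the Weyl-invariant Hecke parameters `τ`;
the extended affine Weyl group `W = W₀ ⋉ t(c P̂)` of the corresponding irreducible reduced
affine root system `R` (affine roots are recorded as pairs `(α, r) ∈ P × ℤ` standing for
`α + m_α r c`), with its simple reflections `s₀, …, s_n`, length function, and the
subgroup `Ω` of length-zero elements; the localization `𝒜` of the group algebra `𝕃[P]`
at the Weyl denominator `δ`; and the smash product `𝒜 # W`. -/
structure DAHACtx where
  n : ℕ
  hn : 0 < n
  c : ℝ
  hc : 0 < c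
  /- the coefficient algebra 𝕃 -/
  L : Type
  [ringL : CommRing L]
  [algCL : Algebra ℂ L]
  [ntL : Nontrivial L]
  /- the ambient Euclidean space V -/
  V : Type
  [nacgV : NormedAddCommGroup V]
  [ipsV : InnerProductSpace ℝ V]
  [fdV : FiniteDimensional ℝ V]
  finrankV : Module.finrank ℝ V = n
  /- the weight lattice P, embedded in V -/
  P : Type
  [acgP : AddCommGroup P]
  [decP : DecidableEq P]
  ePV : P →+ V
  ePV_inj : Function.Injective ePV
  /- the finite root system R₀ (its elements lie in the root lattice Q ⊆ P) -/
  R₀ : Finset P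
  root_ne : ∀ α ∈ R₀, α ≠ (0 : P)
  root_neg : ∀ α ∈ R₀, -α ∈ R₀
  root_span : Submodule.span ℝ (ePV '' R₀) = ⊤
  root_reduced : ∀ α ∈ R₀, ∀ β ∈ R₀, ∀ t : ℝ, ePV β = t • ePV α → t = 1 ∨ t = -1
  /- the coroot pairing ⟨λ, α^∨⟩ (crystallographic integrality) -/
  cp : P → P →+ ℤ
  cp_self : ∀ α ∈ R₀, cp α α = 2
  cp_inner : ∀ α ∈ R₀, ∀ lam : P, ((cp α lam : ℝ)) * ⟪ePV α, ePV α⟫ = 2 * ⟪ePV lam, ePV α⟫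
  root_refl : ∀ α ∈ R₀, ∀ β ∈ R₀, β - cp α β • α ∈ R₀
  irreducible : ∀ S : Finset P, S ⊆ R₀ → S.Nonempty → (R₀ \ S).Nonempty →
      ∃ α ∈ S, ∃ β ∈ R₀ \ S, cp α β ≠ 0
  weight_lattice : ∀ v : V,
      (∀ α ∈ R₀, ∃ z : ℤ, (z : ℝ) * ⟪ePV α, ePV α⟫ = 2 * ⟪v, ePV α⟫) → v ∈ Set.range ePV
  /- the simple roots:  αP j, for j = 1, …, n, is the simple basis of R₀⁺, while
     αP 0 = α₀ is the gradient of the affine simple root a₀ = α₀ + c -/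
  αP : Fin (n+1) → P
  αP_mem : ∀ j, αP j ∈ R₀
  simple_indep : LinearIndependent ℝ (fun j : Fin n => ePV (αP j.succ))
  simple_pos : ∀ β ∈ R₀,
      (∃ g : Fin n → ℕ, β = ∑ j : Fin n, (g j : ℤ) • αP j.succ) ∨
      (∃ g : Fin n → ℕ, β = -(∑ j : Fin n, (g j : ℤ) • αP j.succ))
  /- the Hecke parameters τ_α  (recorded as a function of the gradient root) -/
  τR : P → Lˣ
  /- the extended affine Weyl group W, together with:
     the simple reflections s j (j = 0, …, n);  the gradient action w ↦ w' on P;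
     the reflections s_a attached to the affine roots a = (α, r);  the action of W on
     affine roots;  the gradient projection w = v t_{cλ} ↦ v and the translations t_{cμ} -/
  W : Type
  [grpW : Group W]
  s : Fin (n+1) → W
  grAct : W →* Multiplicative (AddAut P)
  saff : P × ℤ → W
  saff_simple : ∀ j : Fin (n+1), saff (αP j, if j = 0 then 1 else 0) = s j
  saff_sq : ∀ a : P × ℤ, saff a * saff a = 1
  grAct_saff : ∀ (a : P × ℤ) (lam : P), Multiplicative.toAdd (grAct (saff a)) lam = lam - cp a.1 lam • a.1
  root_stable : ∀ (w : W), ∀ α ∈ R₀, Multiplicative.toAdd (grAct w) α ∈ R₀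
  τ_inv : ∀ (w : W) (α : P), τR (Multiplicative.toAdd (grAct w) α) = τR α
  wact : W → P × ℤ → P × ℤ
  wact_one : ∀ a, wact 1 a = a
  wact_mul : ∀ v w a, wact (v * w) a = wact v (wact w a)
  wact_fst : ∀ w a, (wact w a).1 = Multiplicative.toAdd (grAct w) a.1
  saff_conj : ∀ w a, saff (wact w a) = w * saff a * w⁻¹
  prW : W →* W
  prW_saff : ∀ a : P × ℤ, prW (saff a) = saff (a.1, 0)
  grAct_prW : ∀ w, grAct (prW w) = grAct w
  Phat : Type
  [acgPhat : AddCommGroup Phat]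
  tr : Phat → W
  tr_add : ∀ μ ν, tr (μ + ν) = tr μ * tr ν
  tr_inj : Function.Injective tr
  grAct_tr : ∀ (μ : Phat) (lam : P), Multiplicative.toAdd (grAct (tr μ)) lam = lam
  prW_tr : ∀ μ, prW (tr μ) = 1
  W_decomp : ∀ w : W, ∃! μ : Phat, w = prW w * tr μ
  /- the length function on W and the subgroup Ω of length-zero elements -/
  len : W → ℕ
  len_s : ∀ j, len (s j) = 1
  Ω : Subgroup W
  Ω_len : ∀ w : W, w ∈ Ω ↔ len w = 0
  Ω_comm : ∀ u v : Ω, u * v = v * u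
  exists_reduced : ∀ w : W, ∃ (u : Ω) (l : List (Fin (n+1))),
      w = (u : W) * (l.map s).prod ∧ l.length = len w
  len_min : ∀ (w : W) (u : Ω) (l : List (Fin (n+1))),
      w = (u : W) * (l.map s).prod → len w ≤ l.length
  σΩ : Ω →* Equiv.Perm (Fin (n+1))
  Ω_conj : ∀ (u : Ω) (j : Fin (n+1)), (u : W) * s j * (u : W)⁻¹ = s (σΩ u j)
  Ω_aff : ∀ (u : Ω) (j : Fin (n+1)),
      wact (u : W) (αP j, if j = 0 then 1 else 0) = (αP (σΩ u j), if σΩ u j = 0 then 1 else 0)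
  /- the elements (X^λ - X^{s_j'λ})/(1 - X^{-α_j}) of 𝕃[P] -/
  DL : Fin (n+1) → P → AddMonoidAlgebra L P
  DL_spec : ∀ (j : Fin (n+1)) (lam : P),
      (1 - AddMonoidAlgebra.of' L P (-(αP j))) * DL j lam
        = AddMonoidAlgebra.of' L P lam - AddMonoidAlgebra.of' L P (Multiplicative.toAdd (grAct (s j)) lam)
  /- 𝒜 : the localization of 𝕃[P] at the Weyl denominator δ = ∏_{α ∈ R₀} (1 - X^α) -/
  A : Type
  [cringA : CommRing A]
  [algLA : Algebra L A]
  toA : AddMonoidAlgebra L P →ₐ[L] A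
  uδ : Aˣ
  uδ_spec : (uδ : A) = toA (∏ α ∈ R₀, (1 - AddMonoidAlgebra.of' L P α))
  A_surj : ∀ x : A, ∃ (f : AddMonoidAlgebra L P) (k : ℕ), x = toA f * (((uδ⁻¹ : Aˣ) : A)) ^ k
  A_ker : ∀ f : AddMonoidAlgebra L P, toA f = 0 →
      ∃ k : ℕ, (∏ α ∈ R₀, (1 - AddMonoidAlgebra.of' L P α)) ^ k * f = 0
  uXR : P → Aˣ
  uXR_spec : ∀ α ∈ R₀, (uXR α : A) = 1 - toA (AddMonoidAlgebra.of' L P (-α))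
  /- the action of W on 𝒜 (through the gradient w ↦ w') -/
  actA : W →* (A ≃ₐ[L] A)
  actA_X : ∀ (w : W) (lam : P),
      actA w (toA (AddMonoidAlgebra.of' L P lam)) = toA (AddMonoidAlgebra.of' L P (Multiplicative.toAdd (grAct w) lam))
  /- the smash product 𝒜 # W -/
  SW : Type
  [ringSW : Ring SW]
  [algLSW : Algebra L SW]
  ιA : A →ₐ[L] SW
  ιW : W →* SWˣ
  cross : ∀ (w : W) (f : A), ((ιW w : SWˣ) : SW) * ιA f = ιA (actA w f) * ((ιW w : SWˣ) : SW)
  decomp : Function.Bijective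
      (fun x : W →₀ A => x.sum fun w f => ιA f * ((ιW w : SWˣ) : SW))

attribute [instance] DAHACtx.ringL DAHACtx.algCL DAHACtx.ntL DAHACtx.nacgV DAHACtx.ipsV
  DAHACtx.fdV DAHACtx.acgP DAHACtx.decP DAHACtx.grpW DAHACtx.acgPhat DAHACtx.cringA
  DAHACtx.algLA DAHACtx.ringSW DAHACtx.algLSW

namespace DAHACtx

variable (C : DAHACtx)

/-- The Hecke parameter `τ_j = τ_{a_j}`. -/
def τ (j : Fin (C.n + 1)) : C.Lˣ := C.τR (C.αP j)

/-- `m_{jk}`, the order of `s_j s_k` in `W` (with the value `0` standing for `m_{jk} = ∞`). -/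
def m (j k : Fin (C.n + 1)) : ℕ := orderOf (C.s j * C.s k)

/-- The monomial `X^λ` in the group algebra `𝕃[P]`. -/
def Xl (lam : C.P) : AddMonoidAlgebra C.L C.P := AddMonoidAlgebra.of' C.L C.P lam

/-- The monomial `X^λ`, viewed inside the smash product `𝒜 # W`. -/
def XS (lam : C.P) : C.SW := C.ιA (C.toA (C.Xl lam))

/-- The simple affine roots `a_0 = α₀ + c` and `a_j = α_j` (`1 ≤ j ≤ n`). -/
def asimple (j : Fin (C.n + 1)) : C.P × ℤ := (C.αP j, if j = 0 then 1 else 0)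

/-- The Demazure–Lusztig element
`Ť(a) = τ_a s_a + (τ_a - τ_a⁻¹)(1 - X^{-a'})⁻¹ (1 - s_a)` of `𝒜 # W`. -/
def Tc (a : C.P × ℤ) : C.SW :=
  ((C.τR a.1 : C.L)) • ((C.ιW (C.saff a) : C.SWˣ) : C.SW)
    + C.ιA ((((C.τR a.1 : C.L)) - (((C.τR a.1)⁻¹ : C.Lˣ) : C.L)) • (((C.uXR a.1)⁻¹ : C.Aˣ) : C.A))
        * (1 - ((C.ιW (C.saff a) : C.SWˣ) : C.SW))

/-- The Demazure–Lusztig element `Ť_j = Ť(a_j)`. -/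
def Tch (j : Fin (C.n + 1)) : C.SW := C.Tc (C.asimple j)

/-- `w = u s_{j₁} ⋯ s_{j_ℓ}` is a reduced decomposition of `w` (`u ∈ Ω`, `ℓ = ℓ(w)`). -/
def IsReducedWord (w : C.W) (u : C.Ω) (l : List (Fin (C.n + 1))) : Prop :=
  w = (u : C.W) * (l.map C.s).prod ∧ l.length = C.len w

/-- A choice of the `Ω`-part of a reduced decomposition of `w`. -/
def redΩ (w : C.W) : C.Ω := (C.exists_reduced w).choose

/-- A choice of reduced word for `w`. -/
def redList (w : C.W) : List (Fin (C.n + 1)) := (C.exists_reduced w).choose_spec.choose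

theorem red_spec (w : C.W) : C.IsReducedWord w (C.redΩ w) (C.redList w) :=
  (C.exists_reduced w).choose_spec.choose_spec

/-- The element `Ť_w = u Ť_{j₁} ⋯ Ť_{j_ℓ}` of `𝒜 # W`, for a (choice of) reduced
decomposition `w = u s_{j₁} ⋯ s_{j_ℓ}`. -/
def TwS (w : C.W) : C.SW :=
  ((C.ιW (C.redΩ w) : C.SWˣ) : C.SW) * ((C.redList w).map fun j => C.Tch j).prod

/-- The Bruhat partial order on `W`:  `v ≤ w` iff a reduced expression for `v` is obtained
from a reduced expression for `w` by deleting simple reflections. -/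
def BruhatLE (v w : C.W) : Prop :=
  ∃ (u : C.Ω) (lw lv : List (Fin (C.n + 1))),
    C.IsReducedWord w u lw ∧ C.IsReducedWord v u lv ∧ lv.Sublist lw

end DAHACtx

/-! Writing `G := τ - B`, the element `Ť = τ s + B (1 - s)` satisfies `Ť - τ = G (s - 1)`, and
when conjugation by the involution `s` sends `B` to `τ - τ⁻¹ - B` also `Ť + τ⁻¹ = G s + s G s`;
the quadratic relation then follows from `(s - 1)(G s + s G s) = 0`, which only uses `s² = 1`.
For `Ť(a)` we have `B = (τ - τ⁻¹)(1 - X^{-α})⁻¹`, and the required conjugation identity is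
`(1 - X^{-α})⁻¹ + (1 - X^{α})⁻¹ = 1`. -/

theorem sub_one_mul_add_conj_eq_zero {S : Type*} [Ring S] {s : S} (hs : s * s = 1) (G : S) :
    (s - 1) * (G * s + s * G * s) = 0 := by
  calc (s - 1) * (G * s + s * G * s) = (s * s) * G * s - G * s := by noncomm_ring
    _ = 0 := by rw [hs, one_mul, sub_self]

theorem quadratic_relation_of_conj_eq {L S : Type*} [CommRing L] [Ring S] [Algebra L S]
    (τ : Lˣ) {s B : S} (hs : s * s = 1)
    (hB : s * B * s = algebraMap L S ((τ : L) - ((τ⁻¹ : Lˣ) : L)) - B) :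
    ((τ : L) • s + B * (1 - s) - algebraMap L S (τ : L))
      * ((τ : L) • s + B * (1 - s) + algebraMap L S ((τ⁻¹ : Lˣ) : L)) = 0 := by
  set G := algebraMap L S (τ : L) - B
  have hτ : s * algebraMap L S (τ : L) * s = algebraMap L S (τ : L) := by
    rw [← Algebra.commutes, mul_assoc, hs, mul_one]
  have hminus : (τ : L) • s + B * (1 - s) - algebraMap L S (τ : L) = G * (s - 1) := by
    simp only [G, Algebra.smul_def]; noncomm_ring
  have hplus : (τ : L) • s + B * (1 - s) + algebraMap L S ((τ⁻¹ : Lˣ) : L)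
      = G * s + s * G * s := by
    have hsGs : s * G * s = algebraMap L S ((τ⁻¹ : Lˣ) : L) + B := by
      simp only [G, mul_sub, sub_mul, hτ, hB, map_sub]; abel
    rw [hsGs]; simp only [G, Algebra.smul_def]; noncomm_ring
  rw [hminus, hplus, mul_assoc, sub_one_mul_add_conj_eq_zero hs, mul_zero]

theorem one_sub_mul_one_sub_inv_eq_one {R : Type*} [CommRing R] {x y w : R} (hxy : x * y = 1)
    (hw : w * (1 - x) = 1) : (1 - y) * (1 - w) = 1 := by
  linear_combination y * hw + w * hxy

namespace DAHACtx

variable (C : DAHACtx)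

theorem grAct_saff_neg {a : C.P × ℤ} (ha : a.1 ∈ C.R₀) :
    Multiplicative.toAdd (C.grAct (C.saff a)) (-a.1) = a.1 := by
  rw [C.grAct_saff, map_neg, C.cp_self a.1 ha]; abel

theorem Xl_neg_mul_Xl (lam : C.P) : C.toA (C.Xl (-lam)) * C.toA (C.Xl lam) = 1 := by
  rw [← map_mul, Xl, Xl, AddMonoidAlgebra.of'_apply, AddMonoidAlgebra.of'_apply,
    AddMonoidAlgebra.single_mul_single, neg_add_cancel, one_mul, ← AddMonoidAlgebra.one_def,
    map_one]

theorem actA_saff_inv_uXR {a : C.P × ℤ} (ha : a.1 ∈ C.R₀) :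
    C.actA (C.saff a) ((C.uXR a.1)⁻¹ : C.Aˣ) = 1 - ((C.uXR a.1)⁻¹ : C.Aˣ) := by
  have hσu : C.actA (C.saff a) (C.uXR a.1) = 1 - C.toA (C.Xl a.1) := by
    rw [C.uXR_spec a.1 ha, map_sub, map_one, C.actA_X, C.grAct_saff_neg ha, Xl]
  have hleft : C.actA (C.saff a) ((C.uXR a.1)⁻¹ : C.Aˣ) * (1 - C.toA (C.Xl a.1)) = 1 := by
    rw [← hσu, ← map_mul, Units.inv_mul, map_one]
  have hright : (1 - C.toA (C.Xl a.1)) * (1 - ((C.uXR a.1)⁻¹ : C.Aˣ)) = 1 :=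
    one_sub_mul_one_sub_inv_eq_one (C.Xl_neg_mul_Xl a.1) (by rw [Xl, ← C.uXR_spec a.1 ha,
      Units.inv_mul])
  exact left_inv_eq_right_inv hleft hright

theorem saff_mul_ιA_mul_saff (a : C.P × ℤ) (f : C.A) :
    ((C.ιW (C.saff a) : C.SWˣ) : C.SW) * C.ιA f * ((C.ιW (C.saff a) : C.SWˣ) : C.SW)
      = C.ιA (C.actA (C.saff a) f) := by
  rw [C.cross, mul_assoc, ← Units.val_mul, ← map_mul, C.saff_sq, map_one, Units.val_one,
    mul_one]

theorem Tc_quadratic {a : C.P × ℤ} (ha : a.1 ∈ C.R₀) :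
    (C.Tc a - algebraMap C.L C.SW ((C.τR a.1 : C.L)))
      * (C.Tc a + algebraMap C.L C.SW (((C.τR a.1)⁻¹ : C.Lˣ) : C.L)) = 0 := by
  refine quadratic_relation_of_conj_eq (C.τR a.1) ?_ ?_
  · rw [← Units.val_mul, ← map_mul, C.saff_sq, map_one, Units.val_one]
  · rw [saff_mul_ιA_mul_saff, map_smul, C.actA_saff_inv_uXR ha, smul_sub, map_sub,
      Algebra.smul_def, mul_one, AlgHom.commutes]

end DAHACtx

/-- For every affine root `a ∈ R`, the Demazure–Lusztig element `Ť(a)` satisfies the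
quadratic relation `(Ť(a) - τ_a)(Ť(a) + τ_a⁻¹) = 0` in `𝒜 # W`;  in particular
`(Ť_j - τ_j)(Ť_j + τ_j⁻¹) = 0` for `j = 0, …, n`. -/
theorem DL_quadratic_relation (C : DAHACtx) :
    (∀ a : C.P × ℤ, a.1 ∈ C.R₀ →
      (C.Tc a - algebraMap C.L C.SW ((C.τR a.1 : C.L)))
        * (C.Tc a + algebraMap C.L C.SW (((C.τR a.1)⁻¹ : C.Lˣ) : C.L)) = 0) ∧
    (∀ j : Fin (C.n + 1),
      (C.Tch j - algebraMap C.L C.SW ((C.τ j : C.L)))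
        * (C.Tch j + algebraMap C.L C.SW (((C.τ j)⁻¹ : C.Lˣ) : C.L)) = 0) :=
  ⟨fun _ ha => C.Tc_quadratic ha, fun j => C.Tc_quadratic (C.αP_mem j)⟩
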